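/- arXiv:0809.0344 — 2 statements merged into one kernel-verified Lean document; each statement's English description precedes it below -/
import Mathlib

section
/- Let R be a commutative ring and M a free R-module of finite rank n ≥ 1. Then the sequence 0 → End_R(M) → D(M) → Der(R) → 0 is exact and split; in particular D(M) ≅ End_R(M) ⊕ Der(R) as R-modules. -/
/-!
An element of `D(M)` with zero symbol is an additive map `φ` with `φ (a • e) = a • φ e`, i.e. an
element of `End_R(M)`; this gives exactness at `D(M)`. A basis of `M` splits the symbol: applying a
derivation `t` to coordinates satisfies the twisted Leibniz rule because `t` satisfies it on each
coordinate. The splitting lemma for short exact sequences then yields `D(M) ≅ End_R(M) × Der(R)`.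
-/

/-- The module `D(M)` of pairs `(t, φ)` where `t` is a derivation of `R` and
`φ : M → M` is additive with `φ (a • e) = a • φ e + t a • e`. -/
def DM (R : Type*) [CommRing R] (M : Type*) [AddCommGroup M] [Module R M] :
    Submodule R (Derivation ℤ R R × (M →+ M)) where
  carrier := {p | ∀ (a : R) (e : M), p.2 (a • e) = a • p.2 e + p.1 a • e}
  add_mem' {p q} hp hq a e := by
    simp only [Prod.snd_add, AddMonoidHom.add_apply, hp a e, hq a e,
      Prod.fst_add, Derivation.add_apply, add_smul, smul_add]
    abel
  zero_mem' a e := by simp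
  smul_mem' c {p} hp a e := by
    simp only [Prod.smul_snd, AddMonoidHom.smul_apply, hp a e, Prod.smul_fst,
      Derivation.smul_apply, smul_add, smul_smul, mul_comm, smul_eq_mul]

section

variable {R : Type*} [CommRing R] {M : Type*} [AddCommGroup M] [Module R M]

namespace Module.Basis

variable {ι : Type*} (b : Basis ι R M)

noncomputable def coordwise (f : R →+ R) : M →+ M :=
  b.repr.symm.toAddMonoidHom.comp
    ((Finsupp.mapRange.addMonoidHom f).comp b.repr.toAddMonoidHom)

lemma coordwise_apply (f : R →+ R) (e : M) :
    b.coordwise f e = b.repr.symm (Finsupp.mapRange f (map_zero f) (b.repr e)) := rfl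

lemma coordwise_smul (t : Derivation ℤ R R) (a : R) (e : M) :
    b.coordwise t (a • e) = a • b.coordwise t e + t a • e := by
  apply b.repr.injective
  ext i
  simp only [coordwise_apply, AddMonoidHom.coe_coe, map_smul, repr_symm_apply,
    repr_linearCombination, Finsupp.mapRange_apply, Finsupp.coe_smul, Pi.smul_apply,
    smul_eq_mul, Derivation.leibniz, map_add, Finsupp.coe_add, Pi.add_apply]
  ring

end Module.Basis

open Module

namespace DM

def ofEnd : (M →ₗ[R] M) →ₗ[R] DM R M where
  toFun ψ := ⟨(0, ψ.toAddMonoidHom), fun a e => by simp⟩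
  map_add' _ _ := Subtype.ext (by ext <;> simp)
  map_smul' _ _ := Subtype.ext (by ext <;> simp)

@[simp] lemma coe_ofEnd (ψ : M →ₗ[R] M) :
    (ofEnd ψ : Derivation ℤ R R × (M →+ M)) = (0, ψ.toAddMonoidHom) := rfl

def symbol : DM R M →ₗ[R] Derivation ℤ R R :=
  (LinearMap.fst R (Derivation ℤ R R) (M →+ M)).comp (DM R M).subtype

@[simp] lemma symbol_apply (x : DM R M) : symbol x = x.1.1 := rfl

lemma ofEnd_injective : Function.Injective (ofEnd : (M →ₗ[R] M) →ₗ[R] DM R M) :=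
  fun _ _ h => LinearMap.ext fun e => by simpa using congrArg (fun x : DM R M => x.1.2 e) h

lemma exact_ofEnd_symbol : Function.Exact (ofEnd : (M →ₗ[R] M) →ₗ[R] DM R M) symbol := by
  intro x
  constructor
  · intro hx
    refine ⟨{ toFun := x.1.2, map_add' := map_add _, map_smul' := fun a e => ?_ }, ?_⟩
    · simpa [show x.1.1 = 0 from hx] using x.2 a e
    · exact Subtype.ext (Prod.ext (by simpa using hx.symm) rfl)
  · rintro ⟨ψ, rfl⟩
    simp

variable {ι : Type*} (b : Basis ι R M)

noncomputable def splitting : Derivation ℤ R R →ₗ[R] DM R M where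
  toFun t := ⟨(t, b.coordwise t), b.coordwise_smul t⟩
  map_add' t u := Subtype.ext <| Prod.ext rfl <| by
    ext e
    apply b.repr.injective
    ext i
    simp [Basis.coordwise_apply]
  map_smul' c t := Subtype.ext <| Prod.ext rfl <| by
    ext e
    apply b.repr.injective
    ext i
    simp [Basis.coordwise_apply]

lemma symbol_comp_splitting : symbol ∘ₗ splitting b = LinearMap.id := rfl

end DM

end

theorem stmt11_general (R : Type*) [CommRing R] (M : Type*) [AddCommGroup M] [Module R M]
    [Module.Free R M] :
    ∃ (i : (M →ₗ[R] M) →ₗ[R] DM R M) (p : DM R M →ₗ[R] Derivation ℤ R R),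
      (∀ ψ : M →ₗ[R] M, ((i ψ : Derivation ℤ R R × (M →+ M)) =
        (0, ψ.toAddMonoidHom))) ∧
      (∀ x : DM R M, p x = (x : Derivation ℤ R R × (M →+ M)).1) ∧
      Function.Injective i ∧ Function.Exact i p ∧ Function.Surjective p ∧
      (∃ s : Derivation ℤ R R →ₗ[R] DM R M, p ∘ₗ s = LinearMap.id) ∧
      Nonempty (DM R M ≃ₗ[R] (M →ₗ[R] M) × Derivation ℤ R R) := by
  let b := Module.Free.chooseBasis R M
  have hsplit := DM.symbol_comp_splitting b
  have hexact := DM.exact_ofEnd_symbol (R := R) (M := M)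
  refine ⟨DM.ofEnd, DM.symbol, DM.coe_ofEnd, DM.symbol_apply, DM.ofEnd_injective, hexact,
    fun t => ⟨DM.splitting b t, rfl⟩, ⟨DM.splitting b, hsplit⟩,
    ⟨(hexact.splitSurjectiveEquiv DM.ofEnd_injective ⟨DM.splitting b, hsplit⟩).1⟩⟩

/-- If `M` is a free `R`-module of finite rank `n ≥ 1`, the
sequence `0 → End_R(M) → D(M) → Der(R) → 0` is exact and split; in particular
`D(M) ≅ End_R(M) ⊕ Der(R)` as `R`-modules. -/
theorem stmt11 (R : Type*) [CommRing R] (M : Type*) [AddCommGroup M] [Module R M]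
    [Module.Free R M] [Module.Finite R M] (n : ℕ) (hn : 1 ≤ n)
    (hrank : Module.finrank R M = n) :
    ∃ (i : (M →ₗ[R] M) →ₗ[R] DM R M) (p : DM R M →ₗ[R] Derivation ℤ R R),
      (∀ ψ : M →ₗ[R] M, ((i ψ : Derivation ℤ R R × (M →+ M)) =
        (0, ψ.toAddMonoidHom))) ∧
      (∀ x : DM R M, p x = (x : Derivation ℤ R R × (M →+ M)).1) ∧
      Function.Injective i ∧ Function.Exact i p ∧ Function.Surjective p ∧
      (∃ s : Derivation ℤ R R →ₗ[R] DM R M, p ∘ₗ s = LinearMap.id) ∧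
      Nonempty (DM R M ≃ₗ[R] (M →ₗ[R] M) × Derivation ℤ R R) :=
  stmt11_general R M
end

section
/- Let A be an Artinian local ring with residue field k, and let C• : 0 → M^{-n} → ... → M^{-1} → M^0 → 0 be a bounded complex of finite free A-modules such that the complex C• ⊗_A k has cohomology concentrated in degree 0. Then C• is quasi-isomorphic to a single finite free A-module placed in degree 0. -/
open CategoryTheory CategoryTheory.Limits

instance extendScalarsAdditive {R : Type u₁} {S : Type u₂} [CommRing R]
    [CommRing S] (f : R →+* S) : (ModuleCat.extendScalars.{u₁, u₂, v} f).Additive where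
  map_add {M N g h} := by
    apply ModuleCat.hom_ext
    rw [ModuleCat.hom_add]
    apply LinearMap.ext
    intro (x : TensorProduct R ((ModuleCat.restrictScalars f).obj (ModuleCat.of S S)) M)
    induction x using TensorProduct.induction_on with
    | zero => erw [map_zero]
    | tmul s m =>
        erw [LinearMap.add_apply]
        erw [ModuleCat.ExtendScalars.map_tmul, ModuleCat.ExtendScalars.map_tmul,
          ModuleCat.ExtendScalars.map_tmul]
        show s ⊗ₜ[R] (g m + h m) = s ⊗ₜ[R] g m + s ⊗ₜ[R] h m
        exact TensorProduct.tmul_add _ _ _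
    | add x y ihx ihy => erw [map_add, map_add, ihx, ihy]

/-! Over a local ring `R` with residue field `k`, let `M₂ → M₁ → M₀` be a complex with `M₁` finite
and `M₀` finite free which becomes exact after `k ⊗ -`. By right exactness of `k ⊗ -`, the induced
map `M₁ / im d₂ → M₀` stays injective after `k ⊗ -`, so it is split injective. Hence the complex is
exact at `M₁` and `coker d₁` is free. Applied in every degree `i ≠ 0` this makes `C•` exact away
from `0`; since `C•` vanishes in positive degrees, the projection `M⁰ → M⁰ / im d⁻¹` is a
quasi-isomorphism onto a module which is free by the same argument in degree `-1`. -/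

section LinearAlgebra

open Function TensorProduct

variable {R M₂ M₁ M₀ : Type*} [CommRing R] [AddCommGroup M₂] [AddCommGroup M₁] [AddCommGroup M₀]
  [Module R M₂] [Module R M₁] [Module R M₀] {d₂ : M₂ →ₗ[R] M₁} {d₁ : M₁ →ₗ[R] M₀}

lemma LinearMap.lTensor_liftQ_range_injective (N : Type*) [AddCommGroup N] [Module R N]
    (hd : range d₂ ≤ ker d₁) (h : Exact (d₂.lTensor N) (d₁.lTensor N)) :
    Injective (((range d₂).liftQ d₁ hd).lTensor N) := by
  rw [injective_iff_map_eq_zero]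
  intro x hx
  obtain ⟨y, rfl⟩ := lTensor_surjective N (range d₂).mkQ_surjective x
  rw [← lTensor_comp_apply, Submodule.liftQ_mkQ] at hx
  obtain ⟨z, rfl⟩ := (h y).mp hx
  rw [← lTensor_comp_apply, (exact_map_mkQ_range d₂).linearMap_comp_eq_zero, lTensor_zero,
    zero_apply]

variable [IsLocalRing R] [Module.Finite R M₁] [Module.Finite R M₀] [Module.Free R M₀]

local notation "k" => IsLocalRing.ResidueField R

lemma exact_of_exact_lTensor_residueField (hd : LinearMap.range d₂ ≤ LinearMap.ker d₁)
    (h : Exact (d₂.lTensor k) (d₁.lTensor k)) : Exact d₂ d₁ := by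
  obtain ⟨r, hr⟩ := (IsLocalRing.split_injective_iff_lTensor_residueField_injective _).mpr
    (LinearMap.lTensor_liftQ_range_injective k hd h)
  rw [LinearMap.exact_iff, ← Submodule.liftQ_mkQ _ d₁ hd, LinearMap.ker_comp,
    LinearMap.ker_eq_bot_of_inverse hr, Submodule.comap_bot, Submodule.ker_mkQ]

lemma free_quotient_range_of_exact_lTensor_residueField
    (hd : LinearMap.range d₂ ≤ LinearMap.ker d₁) (h : Exact (d₂.lTensor k) (d₁.lTensor k)) :
    Module.Free R (M₀ ⧸ LinearMap.range d₁) := by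
  refine Module.free_of_lTensor_residueField_injective _ _ (Submodule.mkQ_surjective _) ?_
    (LinearMap.lTensor_liftQ_range_injective k hd h)
  rw [LinearMap.exact_iff, Submodule.ker_mkQ, Submodule.range_liftQ]

end LinearAlgebra

namespace HomologicalComplex

variable {ι : Type*} {c : ComplexShape ι} {i j l : ι}

lemma exactAt_iff_function_exact {R : Type*} [Ring R] (K : HomologicalComplex (ModuleCat R) c)
    (hi : c.prev j = i) (hl : c.next j = l) :
    K.ExactAt j ↔ Function.Exact (K.d i j) (K.d j l) := by
  rw [K.exactAt_iff' i j l hi hl, ShortComplex.ShortExact.moduleCat_exact_iff_function_exact]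
  rfl

lemma range_d_le_ker_d {R : Type*} [Ring R] (K : HomologicalComplex (ModuleCat R) c) (i j l : ι) :
    LinearMap.range (K.d i j).hom ≤ LinearMap.ker (K.d j l).hom :=
  LinearMap.range_le_ker_iff.mpr (by rw [← ModuleCat.hom_comp, K.d_comp_d, ModuleCat.hom_zero])

variable {R : Type*} [CommRing R] [IsLocalRing R] (K : HomologicalComplex (ModuleCat R) c)
  [Module.Finite R (K.X j)] [Module.Finite R (K.X l)] [Module.Free R (K.X l)]

local notation "k" => IsLocalRing.ResidueField R

-- `extendScalars (algebraMap R k)` sends `f` to `f.lTensor k` definitionally.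
lemma exactAt_of_exactAt_extendScalars_residueField (hi : c.prev j = i) (hl : c.next j = l)
    (h : (((ModuleCat.extendScalars (algebraMap R k)).mapHomologicalComplex c).obj K).ExactAt j) :
    K.ExactAt j :=
  (K.exactAt_iff_function_exact hi hl).mpr <| exact_of_exact_lTensor_residueField
    (K.range_d_le_ker_d i j l) ((exactAt_iff_function_exact _ hi hl).mp h)

lemma free_quotient_range_d_of_exactAt_extendScalars_residueField (hi : c.prev j = i)
    (hl : c.next j = l)
    (h : (((ModuleCat.extendScalars (algebraMap R k)).mapHomologicalComplex c).obj K).ExactAt j) :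
    Module.Free R (K.X l ⧸ LinearMap.range (K.d j l).hom) :=
  free_quotient_range_of_exact_lTensor_residueField
    (K.range_d_le_ker_d i j l) ((exactAt_iff_function_exact _ hi hl).mp h)

end HomologicalComplex

open HomologicalComplex in
lemma CochainComplex.quasiIso_mkHomToSingle {C : Type*} [Category C] [Abelian C]
    (K : CochainComplex C ℤ) (n : ℤ) {P : C} (τ : K.X n ⟶ P)
    (hτ : ∀ i, (ComplexShape.up ℤ).Rel i n → K.d i n ≫ τ = 0) (hK : K.d n (n + 1) = 0)
    (hexact : ∀ i ≠ n, K.ExactAt i)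
    (hτexact : (ShortComplex.mk (K.d (n - 1) n) τ (hτ _ (by simp))).Exact) [Epi τ] :
    QuasiIso (mkHomToSingle τ hτ) := by
  rw [quasiIso_iff]
  intro i
  by_cases hi : i = n
  · subst i
    have hf : (mkHomToSingle τ hτ).f n = τ ≫ (singleObjXSelf (ComplexShape.up ℤ) n P).inv :=
      mkHomToSingle_f τ hτ
    rw [quasiIsoAt_iff' _ (n - 1) n (n + 1) (by simp) (by simp),
      ShortComplex.quasiIso_iff_of_zeros' _ hK
        ((isZero_single_obj_X (ComplexShape.up ℤ) n P (n - 1) (by simp)).eq_of_src _ _)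
        ((isZero_single_obj_X (ComplexShape.up ℤ) n P (n + 1) (by simp)).eq_of_tgt _ _)]
    refine ⟨ShortComplex.exact_of_iso
      (ShortComplex.isoMk (S₁ := ShortComplex.mk _ _ (hτ _ (by simp))) (Iso.refl _) (Iso.refl _)
        (singleObjXSelf (ComplexShape.up ℤ) n P).symm ?_ ?_) hτexact, ?_⟩
    · exact (Category.id_comp _).trans (Category.comp_id _).symm
    · exact (Category.id_comp _).trans hf
    · show Epi ((mkHomToSingle τ hτ).f n)
      rw [hf]
      infer_instance
  · exact (quasiIsoAt_iff_exactAt' _ i (exactAt_single_obj _ _ _ _ hi)).mpr (hexact i hi)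

theorem stmt12_general (A : Type u) [CommRing A] [IsLocalRing A]
    (Cx : CochainComplex (ModuleCat.{u} A) ℤ)
    (hfree : ∀ i : ℤ, Module.Free A (Cx.X i))
    (hfin : ∀ i : ℤ, Module.Finite A (Cx.X i))
    (n : ℕ) (hbound : ∀ i : ℤ, (0 < i ∨ i < -(n : ℤ)) → IsZero (Cx.X i))
    (hcoh : ∀ i : ℤ, i ≠ 0 → IsZero
      ((((ModuleCat.extendScalars
          (algebraMap A (IsLocalRing.ResidueField A))).mapHomologicalComplex
            (ComplexShape.up ℤ)).obj Cx).homology i)) :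
    ∃ P : ModuleCat.{u} A, Module.Free A P ∧ Module.Finite A P ∧
      ∃ φ : Cx ⟶ (HomologicalComplex.single (ModuleCat A)
          (ComplexShape.up ℤ) 0).obj P, QuasiIso φ := by
  have hexactBaseChange i (hi : i ≠ 0) :=
    (HomologicalComplex.exactAt_iff_isZero_homology _ i).mpr (hcoh i hi)
  have hexact : ∀ i ≠ 0, Cx.ExactAt i := fun i hi ↦ by
    have := hfin i; have := hfin (i + 1); have := hfree (i + 1)
    exact Cx.exactAt_of_exactAt_extendScalars_residueField (i := i - 1) (l := i + 1) (by simp)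
      (by simp) (hexactBaseChange i hi)
  have := hfin 0; have := hfree 0
  set d := (Cx.d (-1) 0).hom
  let π := ModuleCat.ofHom (LinearMap.range d).mkQ
  have hπ : ∀ i, (ComplexShape.up ℤ).Rel i 0 → Cx.d i 0 ≫ π = 0 := by
    intro i (hi : i + 1 = 0)
    obtain rfl : i = -1 := by omega
    exact ModuleCat.hom_ext (LinearMap.exact_map_mkQ_range d).linearMap_comp_eq_zero
  have : Epi π := (ModuleCat.epi_iff_surjective _).mpr (Submodule.mkQ_surjective _)
  refine ⟨.of A (Cx.X 0 ⧸ LinearMap.range d),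
    Cx.free_quotient_range_d_of_exactAt_extendScalars_residueField (i := -2) (by simp) (by simp)
      (hexactBaseChange (-1) (by simp)),
    inferInstance, HomologicalComplex.mkHomToSingle π hπ, ?_⟩
  exact CochainComplex.quasiIso_mkHomToSingle Cx 0 π hπ
    ((hbound 1 (Or.inl one_pos)).eq_of_tgt _ _) hexact
    ((ShortComplex.ShortExact.moduleCat_exact_iff_function_exact _).mpr
      (LinearMap.exact_map_mkQ_range d))

/-- Over an Artinian local ring `A` with residue field `k`, a
bounded complex `C•` of finite free `A`-modules concentrated in degrees
`[-n, 0]` such that `C• ⊗_A k` has cohomology concentrated in degree `0` is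
quasi-isomorphic to a single finite free `A`-module placed in degree `0`. -/
theorem stmt12 (A : Type u) [CommRing A] [IsArtinianRing A] [IsLocalRing A]
    (Cx : CochainComplex (ModuleCat.{u} A) ℤ)
    (hfree : ∀ i : ℤ, Module.Free A (Cx.X i))
    (hfin : ∀ i : ℤ, Module.Finite A (Cx.X i))
    (n : ℕ) (hbound : ∀ i : ℤ, (0 < i ∨ i < -(n : ℤ)) → IsZero (Cx.X i))
    (hcoh : ∀ i : ℤ, i ≠ 0 → IsZero
      ((((ModuleCat.extendScalars
          (algebraMap A (IsLocalRing.ResidueField A))).mapHomologicalComplex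
            (ComplexShape.up ℤ)).obj Cx).homology i)) :
    ∃ P : ModuleCat.{u} A, Module.Free A P ∧ Module.Finite A P ∧
      ∃ φ : Cx ⟶ (HomologicalComplex.single (ModuleCat A)
          (ComplexShape.up ℤ) 0).obj P, QuasiIso φ :=
  stmt12_general A Cx hfree hfin n hbound hcoh
end
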